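/- arXiv:2212.03016 — 2 statements merged into one kernel-verified Lean document; each statement's English description precedes it below -/
import Mathlib

section
/- Let f : ℝ_{≥0}^T → ℝ_{≥0} be monotone, convex, differentiable with f(0) = 0 and satisfying ⟨∇f(x), x⟩ ≤ q·f(x) for some q > 1. Then for any 0 < γ < 1 and y ∈ ℝ_{≥0}^T, f*(γy) ≤ γ^{q/(q−1)} · f*(y). -/
/-!
The growth condition `⟨∇f(x), x⟩ ≤ q f(x)` says that `t ↦ f(t w) t^(-q)` is nonincreasing, so
`f(l w) ≤ l^q f(w)` for `l ≥ 1`. Comparing the conjugate at `w` with the conjugate at `l w` then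
gives `f*(l^(1-q) y) ≤ l^(-q) f*(y)`, and `l = γ^(-1/(q-1))` turns this into the claim.
-/

open Finset

noncomputable def fenchelStar {T : ℕ} (f : (Fin T → ℝ) → ℝ) (y : Fin T → ℝ) : EReal :=
  ⨆ w ∈ {w : Fin T → ℝ | 0 ≤ w}, ((∑ i, w i * y i - f w : ℝ) : EReal)

theorem hasDerivAt_comp_smul_of_hasDerivAt_line {E : Type*} [AddCommGroup E] [Module ℝ E]
    {f : E → ℝ} {f' : E → E → ℝ}
    (hf : ∀ x v, HasDerivAt (fun t : ℝ => f (x + t • v)) (f' x v) 0) (w : E) (t : ℝ) :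
    HasDerivAt (fun s : ℝ => f (s • w)) (f' (t • w) w) t := by
  have h := HasDerivAt.comp_sub_const t t (by rw [sub_self]; exact hf (t • w) w)
  have hline : (fun s : ℝ => f (t • w + (s - t) • w)) = fun s => f (s • w) := by
    funext s
    congr 1
    module
  exact hline ▸ h

theorem antitoneOn_mul_rpow_neg_of_mul_deriv_le {φ φ' : ℝ → ℝ} {q : ℝ}
    (hφ : ∀ t, 0 < t → HasDerivAt φ (φ' t) t) (hle : ∀ t, 0 < t → t * φ' t ≤ q * φ t) :
    AntitoneOn (fun t => φ t * t ^ (-q)) (Set.Ioi 0) := by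
  have hderiv : ∀ t, 0 < t → HasDerivAt (fun t => φ t * t ^ (-q))
      (φ' t * t ^ (-q) + φ t * (-q * t ^ (-q - 1))) t := fun t ht =>
    (hφ t ht).mul (Real.hasDerivAt_rpow_const (Or.inl ht.ne'))
  refine antitoneOn_of_hasDerivWithinAt_nonpos (convex_Ioi 0)
    (fun t ht => (hderiv t ht).continuousAt.continuousWithinAt)
    (fun t ht => (hderiv t (interior_subset ht)).hasDerivWithinAt) fun t ht => ?_
  have ht : 0 < t := interior_subset ht
  have hsplit : t ^ (-q) = t * t ^ (-q - 1) := by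
    rw [show -q = 1 + (-q - 1) by ring, Real.rpow_add ht, Real.rpow_one]
    ring_nf
  calc φ' t * t ^ (-q) + φ t * (-q * t ^ (-q - 1))
      = (t * φ' t - q * φ t) * t ^ (-q - 1) := by rw [hsplit]; ring
    _ ≤ 0 := mul_nonpos_of_nonpos_of_nonneg (by linarith [hle t ht]) (by positivity)

theorem le_rpow_mul_of_mul_deriv_le {φ φ' : ℝ → ℝ} {q : ℝ}
    (hφ : ∀ t, 0 < t → HasDerivAt φ (φ' t) t) (hle : ∀ t, 0 < t → t * φ' t ≤ q * φ t)
    {l : ℝ} (hl : 1 ≤ l) : φ l ≤ l ^ q * φ 1 := by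
  have hl0 : 0 < l := zero_lt_one.trans_le hl
  have hanti := antitoneOn_mul_rpow_neg_of_mul_deriv_le hφ hle
    (Set.mem_Ioi.mpr zero_lt_one) (Set.mem_Ioi.mpr hl0) hl
  simp only [Real.one_rpow, mul_one] at hanti
  calc φ l = l ^ q * (φ l * l ^ (-q)) := by
        rw [mul_left_comm, ← Real.rpow_add hl0, add_neg_cancel, Real.rpow_zero, mul_one]
    _ ≤ l ^ q * φ 1 := mul_le_mul_of_nonneg_left hanti (by positivity)

section Conjugate

variable {T : ℕ} {f : (Fin T → ℝ) → ℝ} {g : (Fin T → ℝ) → (Fin T → ℝ)} {q : ℝ}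

theorem map_smul_le_rpow_mul
    (hdiff : ∀ x v : Fin T → ℝ, HasDerivAt (fun t : ℝ => f (x + t • v)) (∑ i, g x i * v i) 0)
    (hgrowth : ∀ x, 0 ≤ x → ∑ i, g x i * x i ≤ q * f x)
    {w : Fin T → ℝ} (hw : 0 ≤ w) {l : ℝ} (hl : 1 ≤ l) :
    f (l • w) ≤ l ^ q * f w := by
  have h := le_rpow_mul_of_mul_deriv_le (φ := fun t : ℝ => f (t • w)) (q := q)
    (fun t _ => hasDerivAt_comp_smul_of_hasDerivAt_line hdiff w t) (fun t ht => ?_) hl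
  · simpa using h
  calc t * ∑ i, g (t • w) i * w i = ∑ i, g (t • w) i * (t • w) i := by
        rw [mul_sum]
        simp only [Pi.smul_apply, smul_eq_mul]
        ring_nf
    _ ≤ q * f (t • w) := hgrowth _ (smul_nonneg ht.le hw)

theorem coe_le_fenchelStar {y u : Fin T → ℝ} (hu : 0 ≤ u) :
    ((∑ i, u i * y i - f u : ℝ) : EReal) ≤ fenchelStar f y :=
  le_iSup₂ (f := fun w (_ : w ∈ {w : Fin T → ℝ | 0 ≤ w}) => ((∑ i, w i * y i - f w : ℝ) : EReal))
    u hu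

theorem fenchelStar_rpow_smul_le
    (hdiff : ∀ x v : Fin T → ℝ, HasDerivAt (fun t : ℝ => f (x + t • v)) (∑ i, g x i * v i) 0)
    (hgrowth : ∀ x, 0 ≤ x → ∑ i, g x i * x i ≤ q * f x)
    (y : Fin T → ℝ) {l : ℝ} (hl : 1 ≤ l) :
    fenchelStar f (l ^ (1 - q) • y) ≤ ((l ^ (-q) : ℝ) : EReal) * fenchelStar f y := by
  have hl0 : 0 < l := zero_lt_one.trans_le hl
  refine iSup₂_le fun w (hw : 0 ≤ w) => ?_
  have hlw : 0 ≤ l • w := smul_nonneg hl0.le hw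
  have hreal : ∑ i, w i * (l ^ (1 - q) • y) i - f w
      ≤ l ^ (-q) * (∑ i, (l • w) i * y i - f (l • w)) := by
    have hpow : l ^ (1 - q) = l ^ (-q) * l := by
      rw [sub_eq_neg_add, Real.rpow_add hl0, Real.rpow_one]
    have hf : l ^ (-q) * f (l • w) ≤ f w := by
      calc l ^ (-q) * f (l • w) ≤ l ^ (-q) * (l ^ q * f w) :=
            mul_le_mul_of_nonneg_left (map_smul_le_rpow_mul hdiff hgrowth hw hl) (by positivity)
        _ = f w := by
            rw [← mul_assoc, ← Real.rpow_add hl0, neg_add_cancel, Real.rpow_zero, one_mul]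
    have hsum : ∑ i, w i * (l ^ (1 - q) • y) i = l ^ (-q) * ∑ i, (l • w) i * y i := by
      rw [mul_sum]
      simp only [Pi.smul_apply, smul_eq_mul, hpow]
      exact sum_congr rfl fun i _ => by ring
    rw [hsum]
    linarith
  calc ((∑ i, w i * (l ^ (1 - q) • y) i - f w : ℝ) : EReal)
      ≤ ((l ^ (-q) : ℝ) : EReal) * ((∑ i, (l • w) i * y i - f (l • w) : ℝ) : EReal) := by
        exact_mod_cast hreal
    _ ≤ ((l ^ (-q) : ℝ) : EReal) * fenchelStar f y :=
        mul_le_mul_of_nonneg_left (coe_le_fenchelStar hlw) (by exact_mod_cast (by positivity))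

end Conjugate

theorem conjugate_scaling_general {T : ℕ} (f : (Fin T → ℝ) → ℝ) (g : (Fin T → ℝ) → (Fin T → ℝ))
    (q : ℝ) (hq : 1 < q)
    (hdiff : ∀ x v : Fin T → ℝ, HasDerivAt (fun t : ℝ => f (x + t • v)) (∑ i, g x i * v i) 0)
    (hgrowth : ∀ x, 0 ≤ x → ∑ i, g x i * x i ≤ q * f x)
    (γ : ℝ) (hγ0 : 0 < γ) (hγ1 : γ < 1) (y : Fin T → ℝ) :
    fenchelStar f (γ • y) ≤ ((γ ^ (q / (q - 1)) : ℝ) : EReal) * fenchelStar f y := by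
  have hq1 : q - 1 ≠ 0 := by linarith
  set l := γ ^ (-(q - 1)⁻¹)
  have hl : 1 ≤ l :=
    Real.one_le_rpow_of_pos_of_le_one_of_nonpos hγ0 hγ1.le (by simp; linarith)
  have hγ : l ^ (1 - q) = γ := by
    rw [← Real.rpow_mul hγ0.le, show -(q - 1)⁻¹ * (1 - q) = 1 by field_simp; ring,
      Real.rpow_one]
  have hc : l ^ (-q) = γ ^ (q / (q - 1)) := by
    rw [← Real.rpow_mul hγ0.le, show -(q - 1)⁻¹ * -q = q / (q - 1) by field_simp]
  simpa only [hγ, hc] using fenchelStar_rpow_smul_le hdiff hgrowth y hl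

theorem conjugate_scaling {T : ℕ} (f : (Fin T → ℝ) → ℝ) (g : (Fin T → ℝ) → (Fin T → ℝ))
    (q : ℝ) (hq : 1 < q)
    (hnonneg : ∀ x, 0 ≤ x → 0 ≤ f x)
    (hmono : ∀ x y : Fin T → ℝ, 0 ≤ x → x ≤ y → f x ≤ f y)
    (hconv : ConvexOn ℝ {w : Fin T → ℝ | 0 ≤ w} f)
    (hdiff : ∀ x v : Fin T → ℝ, HasDerivAt (fun t : ℝ => f (x + t • v)) (∑ i, g x i * v i) 0)
    (hf0 : f 0 = 0)
    (hgrowth : ∀ x, 0 ≤ x → ∑ i, g x i * x i ≤ q * f x)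
    (γ : ℝ) (hγ0 : 0 < γ) (hγ1 : γ < 1) (y : Fin T → ℝ) (hy : 0 ≤ y) :
    fenchelStar f (γ • y) ≤ ((γ ^ (q / (q - 1)) : ℝ) : EReal) * fenchelStar f y :=
  conjugate_scaling_general f g q hq hdiff hgrowth γ hγ0 hγ1 y
end

section
/- Suppose a nonnegative differentiable function x(τ) satisfies the differential inequality x'(τ) ≥ s·(x(τ) + 1/k) on an interval of total measure m, with x(τ₀) = 0, x nondecreasing, and x'(τ) ≥ 0 elsewhere. Then the final value satisfies x̄ ≥ (1/k)(exp(s·m) − 1). -/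
/-!
The substitution `u = log (k x + 1)` linearizes the inequality: `u' = k x' / (k x + 1)` is at
least `s` on `E` and nonnegative elsewhere, so `u` gains at least `s m` between `τ₀` and `τ₁`,
while `u τ₀ = 0`. Exponentiating gives `k x̄ + 1 ≥ exp (s m)`.
-/

open MeasureTheory Set

lemma intervalIntegral_indicator_const_of_subset_Icc {a b c : ℝ} {E : Set ℝ} (hab : a ≤ b)
    (hE : MeasurableSet E) (hEsub : E ⊆ Icc a b) :
    ∫ t in a..b, E.indicator (fun _ => c) t = c * volume.real E := by
  rw [intervalIntegral.integral_of_le hab, ← integral_Icc_eq_integral_Ioc,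
    setIntegral_indicator hE, inter_eq_right.mpr hEsub, setIntegral_const, smul_eq_mul,
    mul_comm]

theorem mul_volume_real_le_sub_of_le_deriv {f f' : ℝ → ℝ} {a b c : ℝ} {E : Set ℝ} (hab : a ≤ b)
    (hf : ContinuousOn f (Icc a b)) (hderiv : ∀ t ∈ Ioo a b, HasDerivAt f (f' t) t)
    (hE : MeasurableSet E) (hEsub : E ⊆ Icc a b) (hc : ∀ t ∈ E, c ≤ f' t)
    (hnonneg : ∀ t ∈ Ioo a b \ E, 0 ≤ f' t) :
    c * volume.real E ≤ f b - f a := by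
  have hEfin : volume E ≠ ⊤ :=
    (measure_mono hEsub).trans_lt (by simp [Real.volume_Icc]) |>.ne
  have hint : IntegrableOn (E.indicator fun _ => c) (Icc a b) :=
    ((integrable_indicator_iff hE).mpr (integrableOn_const hEfin)).integrableOn
  have hle : ∀ t ∈ Ioo a b, E.indicator (fun _ => c) t ≤ f' t := by
    intro t ht
    by_cases htE : t ∈ E
    · simpa [indicator_of_mem htE] using hc t htE
    · simpa [indicator_of_notMem htE] using hnonneg t ⟨ht, htE⟩
  rw [← intervalIntegral_indicator_const_of_subset_Icc hab hE hEsub]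
  exact intervalIntegral.integral_le_sub_of_hasDeriv_right_of_le hab hf
    (fun t ht => (hderiv t ht).hasDerivWithinAt) hint hle

lemma monotoneOn_Icc_of_deriv_nonneg {f : ℝ → ℝ} {a b : ℝ}
    (hdiff : ∀ t ∈ Icc a b, DifferentiableAt ℝ f t) (hf' : ∀ t ∈ Ioo a b, 0 ≤ deriv f t) :
    MonotoneOn f (Icc a b) :=
  monotoneOn_of_deriv_nonneg (convex_Icc a b)
    (fun t ht => (hdiff t ht).continuousAt.continuousWithinAt)
    (fun t ht => (hdiff t (interior_subset ht)).differentiableWithinAt)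
    (fun t ht => hf' t (by rwa [interior_Icc] at ht))

lemma le_div_of_mul_add_inv_le {s k y d : ℝ} (hk : 0 < k) (hy : 0 < k * y + 1)
    (h : s * (y + 1 / k) ≤ d) : s ≤ k * d / (k * y + 1) := by
  rw [le_div_iff₀ hy]
  field_simp at h
  linarith

theorem gronwall_lower_bound_general (x : ℝ → ℝ) (τ₀ τ₁ s k m : ℝ)
    (hτ : τ₀ ≤ τ₁) (hk : 0 < k)
    (hx0 : x τ₀ = 0)
    (hdiff : ∀ τ ∈ Set.Icc τ₀ τ₁, DifferentiableAt ℝ x τ)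
    (E : Set ℝ) (hE : MeasurableSet E) (hEsub : E ⊆ Set.Icc τ₀ τ₁)
    (hEm : (volume E).toReal = m)
    (hode : ∀ τ ∈ E, s * (x τ + 1 / k) ≤ deriv x τ)
    (hmono : ∀ τ ∈ Set.Icc τ₀ τ₁, 0 ≤ deriv x τ) :
    (1 / k) * (Real.exp (s * m) - 1) ≤ x τ₁ := by
  have hcont : ContinuousOn x (Icc τ₀ τ₁) := fun τ hτ =>
    (hdiff τ hτ).continuousAt.continuousWithinAt
  have hx_mono := monotoneOn_Icc_of_deriv_nonneg hdiff fun τ hτ => hmono τ (Ioo_subset_Icc_self hτ)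
  have hpos : ∀ τ ∈ Icc τ₀ τ₁, 0 < k * x τ + 1 := fun τ hτ' => by
    have := hx_mono (left_mem_Icc.2 hτ) hτ' hτ'.1
    rw [hx0] at this
    positivity
  have hlog := mul_volume_real_le_sub_of_le_deriv (c := s)
    (f := fun τ => Real.log (k * x τ + 1)) (f' := fun τ => k * deriv x τ / (k * x τ + 1)) hτ
    ((continuousOn_const.mul hcont).add continuousOn_const |>.log
      fun τ hτ => (hpos τ hτ).ne')
    (fun τ hτ => (((hdiff τ (Ioo_subset_Icc_self hτ)).hasDerivAt.const_mul k).add_const 1).log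
      (hpos τ (Ioo_subset_Icc_self hτ)).ne')
    hE hEsub (fun τ hτ => le_div_of_mul_add_inv_le hk (hpos τ (hEsub hτ)) (hode τ hτ))
    (fun τ hτ => div_nonneg (mul_nonneg hk.le (hmono τ (Ioo_subset_Icc_self hτ.1)))
      (hpos τ (Ioo_subset_Icc_self hτ.1)).le)
  simp only [measureReal_def, hEm, hx0, mul_zero, zero_add, Real.log_one, sub_zero] at hlog
  have hexp := (Real.le_log_iff_exp_le (hpos τ₁ (right_mem_Icc.2 hτ))).1 hlog
  rw [one_div_mul_eq_div, div_le_iff₀ hk]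
  linarith

theorem gronwall_lower_bound (x : ℝ → ℝ) (τ₀ τ₁ s k m : ℝ)
    (hτ : τ₀ ≤ τ₁) (hs : 0 < s) (hk : 0 < k) (hm : 0 ≤ m)
    (hx0 : x τ₀ = 0)
    (hdiff : ∀ τ ∈ Set.Icc τ₀ τ₁, DifferentiableAt ℝ x τ)
    (E : Set ℝ) (hE : MeasurableSet E) (hEsub : E ⊆ Set.Icc τ₀ τ₁)
    (hEm : (volume E).toReal = m)
    (hode : ∀ τ ∈ E, s * (x τ + 1 / k) ≤ deriv x τ)
    (hmono : ∀ τ ∈ Set.Icc τ₀ τ₁, 0 ≤ deriv x τ) :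
    (1 / k) * (Real.exp (s * m) - 1) ≤ x τ₁ :=
  gronwall_lower_bound_general x τ₀ τ₁ s k m hτ hk hx0 hdiff E hE hEsub hEm hode hmono
end
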